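/- arXiv:math/0605223 — 5 statements merged into one kernel-verified Lean document; each statement's English description precedes it below -/
import Mathlib

section
/- Let K be a field of characteristic zero, let V₁ and V₂ be K-vector spaces, and let T₁ and T₂ be unipotent K-linear automorphisms of V₁ and V₂ respectively. Then T₁ ⊗ T₂ is a unipotent automorphism of V₁ ⊗_K V₂, and log(T₁ ⊗ T₂) = (log T₁) ⊗ id + id ⊗ (log T₂). -/
open TensorProduct

/-- The logarithm of a unipotent endomorphism of a vector space over a field of
characteristic zero: the finite sum `Σ_{k≥1} (−1)^{k+1} (T − id)^k / k` (terms with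
`k ≥ nilpotencyClass (T - 1)` vanish, so we cut the sum off there). -/
noncomputable def logEnd {K V : Type*} [Field K] [CharZero K] [AddCommGroup V] [Module K V]
    (T : Module.End K V) : Module.End K V :=
  ∑ k ∈ Finset.Icc 1 (nilpotencyClass (T - 1)),
    ((-1 : K) ^ (k + 1) * (k : K)⁻¹) • (T - 1) ^ k

section Aux

variable (K : Type*) [Field K] [CharZero K]

/-- Truncated logarithm series of `1 + x`. -/
noncomputable def LK {A : Type*} [Ring A] [Algebra K A] (n : ℕ) (x : A) : A :=
  ∑ k ∈ Finset.Icc 1 n, ((-1 : K) ^ (k + 1) * (k : K)⁻¹) • x ^ k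

variable {A A' : Type*} [Ring A] [Algebra K A] [Ring A'] [Algebra K A']

lemma LK_congr {x : A} {c n : ℕ} (hx : x ^ c = 0) (hcn : c ≤ n) :
    LK K n x = LK K c x := by
  refine (Finset.sum_subset (Finset.Icc_subset_Icc_right hcn) ?_).symm
  intro k hk hk'
  simp only [Finset.mem_Icc] at hk hk'
  have : c ≤ k := by omega
  rw [pow_eq_zero_of_le this hx, smul_zero]

lemma map_LK (f : A →ₐ[K] A') (n : ℕ) (x : A) : f (LK K n x) = LK K n (f x) := by
  simp only [LK, map_sum, map_smul, map_pow]

lemma logEnd_eq_LK {V : Type*} [AddCommGroup V] [Module K V] (T : Module.End K V)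
    (h : IsNilpotent (T - 1)) {n : ℕ} (hn : nilpotencyClass (T - 1) ≤ n) :
    logEnd T = LK K n (T - 1) := by
  rw [LK_congr K (pow_nilpotencyClass h) hn]; rfl

open Polynomial in
lemma derivative_LK {B : Type*} [CommRing B] [Algebra K B] (n : ℕ) (x : B[X]) :
    derivative (LK K n x) = (∑ j ∈ Finset.range n, (-x) ^ j) * derivative x := by
  unfold LK
  rw [map_sum, show Finset.Icc 1 n = Finset.Ico 1 (n + 1) from (Finset.Ico_add_one_right_eq_Icc 1 n).symm,
    Finset.sum_Ico_eq_sum_range, Finset.sum_mul]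
  simp only [Nat.add_sub_cancel]
  refine Finset.sum_congr rfl fun j _ => ?_
  rw [derivative_smul, derivative_pow]
  have h1 : (((1 + j : ℕ) : B)) = algebraMap K B ((1 + j : ℕ) : K) := by
    simp
  have hne : ((1 + j : ℕ) : K) ≠ 0 := Nat.cast_ne_zero.mpr (by omega)
  rw [h1, show (C (algebraMap K B ((1 + j : ℕ) : K))) = algebraMap K B[X] ((1 + j : ℕ) : K) from rfl,
    ← Algebra.smul_def, smul_mul_assoc, smul_smul]
  have h2 : (-1 : K) ^ (1 + j + 1) * ((1 + j : ℕ) : K)⁻¹ * ((1 + j : ℕ) : K) = (-1 : K) ^ j := by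
    rw [mul_assoc, inv_mul_cancel₀ hne, mul_one, show 1 + j + 1 = j + 2 from by omega, pow_add]
    norm_num
  rw [h2, show 1 + j - 1 = j from by omega]
  rw [Algebra.smul_def, map_pow, map_neg, map_one, neg_pow]
  ring

open Polynomial in
lemma constantCoeff_LK {B : Type*} [CommRing B] [Algebra K B] (n : ℕ) (x : B[X])
    (hx : constantCoeff x = 0) : constantCoeff (LK K n x) = 0 := by
  unfold LK
  rw [map_sum]
  refine Finset.sum_eq_zero fun k hk => ?_
  have hk1 : k ≠ 0 := by simp only [Finset.mem_Icc] at hk; omega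
  have : constantCoeff (((-1 : K) ^ (k + 1) * (k : K)⁻¹) • x ^ k)
      = ((-1 : K) ^ (k + 1) * (k : K)⁻¹) • (constantCoeff (x ^ k)) := by
    simp [constantCoeff_apply, coeff_smul]
  rw [this, map_pow, hx, zero_pow hk1, smul_zero]

open Polynomial in
/-- Key identity, commutative case: `log((1+a)(1+b)) = log(1+a) + log(1+b)` for nilpotent
`a`, `b` in a commutative algebra over a char-zero field. -/
lemma LK_add_of_comm {B : Type*} [CommRing B] [Algebra K B] (a b : B) {p q n : ℕ}
    (ha : a ^ p = 0) (hb : b ^ q = 0) (hn : p + q ≤ n) :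
    LK K n (a + b + a * b) = LK K n a + LK K n b := by
  set α : B[X] := C a * X with hα_def
  set β : B[X] := C b * X with hβ_def
  set γ : B[X] := α + β + α * β with hγ_def
  have hαp : α ^ p = 0 := by rw [hα_def, mul_pow, ← C_pow, ha, map_zero, zero_mul]
  have hβq : β ^ q = 0 := by rw [hβ_def, mul_pow, ← C_pow, hb, map_zero, zero_mul]
  have hαn : α ^ n = 0 := pow_eq_zero_of_le (by omega) hαp
  have hβn : β ^ n = 0 := pow_eq_zero_of_le (by omega) hβq
  have hγn : γ ^ n = 0 := by
    have hsplit : γ = α * (1 + β) + β := by rw [hγ_def]; ring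
    rw [hsplit, add_pow]
    refine Finset.sum_eq_zero fun i hi => ?_
    rcases le_or_gt p i with h | h
    · rw [mul_pow, pow_eq_zero_of_le h hαp, zero_mul, zero_mul, zero_mul]
    · have : q ≤ n - i := by omega
      rw [pow_eq_zero_of_le this hβq, mul_zero, zero_mul]
  -- geometric-series inverses
  set S : B[X] → B[X] := fun x => ∑ j ∈ Finset.range n, (-x) ^ j with hS_def
  have hinv : ∀ x : B[X], x ^ n = 0 → (1 + x) * S x = 1 := by
    intro x hx
    have hxn : (-x) ^ n = 0 := by rw [neg_pow, hx, mul_zero]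
    have h : S x * (-x - 1) = -1 := by
      simpa [hS_def, hxn] using geom_sum_mul (-x) n
    linear_combination -h
  have hinvα := hinv α hαn
  have hinvβ := hinv β hβn
  have hinvγ := hinv γ hγn
  have hSγ : S γ = S α * S β := by
    have h2 : (1 + γ) * (S α * S β) = 1 := by
      have : (1 + γ) = (1 + α) * (1 + β) := by rw [hγ_def]; ring
      calc (1 + γ) * (S α * S β) = ((1 + α) * S α) * ((1 + β) * S β) := by rw [this]; ring
      _ = 1 := by rw [hinvα, hinvβ, one_mul]
    calc S γ = ((1 + γ) * (S α * S β)) * S γ := by rw [h2, one_mul]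
    _ = ((1 + γ) * S γ) * (S α * S β) := by ring
    _ = S α * S β := by rw [hinvγ, one_mul]
  set g : B[X] := LK K n γ - LK K n α - LK K n β with hg_def
  have hdα : derivative α = C a := by simp [hα_def]
  have hdβ : derivative β = C b := by simp [hβ_def]
  have hdγ : derivative γ = C a + C b + (C a * β + α * C b) := by
    rw [hγ_def, derivative_add, derivative_add, hdα, hdβ, derivative_mul, hdα, hdβ]
  have hg' : derivative g = 0 := by
    have hs : ∀ x : B[X], (∑ j ∈ Finset.range n, (-x) ^ j) = S x := fun _ => rfl
    rw [hg_def, map_sub, map_sub, derivative_LK, derivative_LK, derivative_LK, hs, hs, hs]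
    rw [hSγ, hdα, hdβ, hdγ]
    linear_combination (C a * S α) * hinvβ + (C b * S β) * hinvα
  have hg0 : g = 0 := by
    ext m
    rcases m with _ | m
    · have cα : constantCoeff α = 0 := by simp [hα_def, constantCoeff_apply]
      have cβ : constantCoeff β = 0 := by simp [hβ_def, constantCoeff_apply]
      have cγ : constantCoeff γ = 0 := by rw [hγ_def]; rw [map_add, map_add, cα, cβ, map_mul, cα, cβ]; ring
      have : constantCoeff g = 0 := by
        rw [hg_def, map_sub, map_sub, constantCoeff_LK K n γ cγ, constantCoeff_LK K n α cα,
          constantCoeff_LK K n β cβ]; ring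
      simpa [constantCoeff_apply] using this
    · have h := congrArg (fun p : B[X] => coeff p m) hg'
      simp only [coeff_derivative, coeff_zero] at h
      have hKne : ((m : K) + 1) ≠ 0 := by
        have := Nat.cast_add_one_ne_zero (R := K) m
        simpa using this
      have hcast : ((m : B) + 1) = algebraMap K B ((m : K) + 1) := by simp
      rw [hcast] at h
      have : coeff g (m + 1)
          = coeff g (m + 1) * algebraMap K B ((m : K) + 1) * algebraMap K B (((m : K) + 1)⁻¹) := by
        rw [mul_assoc, ← map_mul, mul_inv_cancel₀ hKne, map_one, mul_one]
      rw [this, h, zero_mul, coeff_zero]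
  -- evaluate at X = 1
  set f : B[X] →ₐ[K] B := (Polynomial.aeval (1 : B)).restrictScalars K with hf_def
  have hfg := congrArg (⇑f) hg0
  rw [hg_def, map_sub, map_sub, map_zero, map_LK, map_LK, map_LK] at hfg
  have hfα : f α = a := by simp [hf_def, hα_def]
  have hfβ : f β = b := by simp [hf_def, hβ_def]
  have hfγ : f γ = a + b + a * b := by
    rw [hγ_def, map_add, map_add, hfα, hfβ, map_mul, hfα, hfβ]
  rw [hfα, hfβ, hfγ] at hfg
  linear_combination hfg

/-- Key identity, general (noncommutative) case, for commuting nilpotents. -/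
lemma LK_add_of_commute (a b : A) (hab : Commute a b) {p q n : ℕ}
    (ha : a ^ p = 0) (hb : b ^ q = 0) (hn : p + q ≤ n) :
    LK K n (a + b + a * b) = LK K n a + LK K n b := by
  have hcomm : ∀ x ∈ ({a, b} : Set A), ∀ y ∈ ({a, b} : Set A), x * y = y * x := by
    rintro x (rfl | rfl) y (rfl | rfl)
    · rfl
    · exact hab
    · exact hab.symm
    · rfl
  set S := Algebra.adjoin K ({a, b} : Set A) with hS_def
  set a' : S := ⟨a, Algebra.subset_adjoin (by simp)⟩ with ha'_def
  set b' : S := ⟨b, Algebra.subset_adjoin (by simp)⟩ with hb'_def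
  have ha' : a' ^ p = 0 := by
    apply Subtype.ext
    show (a' : A) ^ p = 0
    simpa using ha
  have hb' : b' ^ q = 0 := by
    apply Subtype.ext
    show (b' : A) ^ q = 0
    simpa using hb
  have key : LK K n (a' + b' + a' * b') = LK K n a' + LK K n b' :=
    @LK_add_of_comm K _ _ S (Algebra.adjoinCommRingOfComm K hcomm) (Subalgebra.algebra _)
      a' b' p q n ha' hb' hn
  have := congrArg (⇑(S.val)) key
  rw [map_add, map_LK, map_LK, map_LK] at this
  simpa using this

lemma rTensorAlgHom_exists {V₁ V₂ : Type*} [AddCommGroup V₁] [Module K V₁]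
    [AddCommGroup V₂] [Module K V₂] :
    ∃ f : Module.End K V₁ →ₐ[K] Module.End K (V₁ ⊗[K] V₂),
      ∀ g : Module.End K V₁, f g = g.rTensor V₂ := by
  refine ⟨{ toFun := fun g => g.rTensor V₂
            map_one' := ?_
            map_mul' := fun g₁ g₂ => ?_
            map_zero' := ?_
            map_add' := fun g₁ g₂ => LinearMap.rTensor_add V₂ g₁ g₂
            commutes' := fun c => ?_ }, fun _ => rfl⟩
  · exact LinearMap.rTensor_id V₂ V₁
  · exact LinearMap.rTensor_mul V₂ g₁ g₂
  · exact LinearMap.rTensor_zero V₂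
  · show (algebraMap K (Module.End K V₁) c).rTensor V₂ = algebraMap K _ c
    rw [Algebra.algebraMap_eq_smul_one, Algebra.algebraMap_eq_smul_one,
      LinearMap.rTensor_smul]
    exact congrArg _ (LinearMap.rTensor_id V₂ V₁)

lemma lTensorAlgHom_exists {V₁ V₂ : Type*} [AddCommGroup V₁] [Module K V₁]
    [AddCommGroup V₂] [Module K V₂] :
    ∃ f : Module.End K V₂ →ₐ[K] Module.End K (V₁ ⊗[K] V₂),
      ∀ g : Module.End K V₂, f g = g.lTensor V₁ := by
  refine ⟨{ toFun := fun g => g.lTensor V₁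
            map_one' := ?_
            map_mul' := fun g₁ g₂ => ?_
            map_zero' := ?_
            map_add' := fun g₁ g₂ => LinearMap.lTensor_add V₁ g₁ g₂
            commutes' := fun c => ?_ }, fun _ => rfl⟩
  · exact LinearMap.lTensor_id V₁ V₂
  · exact LinearMap.lTensor_mul V₁ g₁ g₂
  · exact LinearMap.lTensor_zero V₁
  · show (algebraMap K (Module.End K V₂) c).lTensor V₁ = algebraMap K _ c
    rw [Algebra.algebraMap_eq_smul_one, Algebra.algebraMap_eq_smul_one,
      LinearMap.lTensor_smul]
    exact congrArg _ (LinearMap.lTensor_id V₁ V₂)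

end Aux

/-- If `T₁`, `T₂` are unipotent automorphisms of vector spaces `V₁`, `V₂` over a field of
characteristic zero, then `T₁ ⊗ T₂` is a unipotent automorphism of `V₁ ⊗ V₂` and
`log (T₁ ⊗ T₂) = (log T₁) ⊗ id + id ⊗ (log T₂)`. -/
theorem log_of_tensor_unipotent {K V₁ V₂ : Type*} [Field K] [CharZero K]
    [AddCommGroup V₁] [Module K V₁] [AddCommGroup V₂] [Module K V₂]
    (T₁ : Module.End K V₁) (T₂ : Module.End K V₂)
    (hu₁ : IsUnit T₁) (hn₁ : IsNilpotent (T₁ - 1))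
    (hu₂ : IsUnit T₂) (hn₂ : IsNilpotent (T₂ - 1)) :
    IsUnit (TensorProduct.map T₁ T₂) ∧ IsNilpotent (TensorProduct.map T₁ T₂ - 1) ∧
      logEnd (TensorProduct.map T₁ T₂) =
        (logEnd T₁).rTensor V₂ + (logEnd T₂).lTensor V₁ := by
  obtain ⟨p, hp⟩ := hn₁
  obtain ⟨q, hq⟩ := hn₂
  set N₁ : Module.End K (V₁ ⊗[K] V₂) := (T₁ - 1).rTensor V₂ with hN₁_def
  set N₂ : Module.End K (V₁ ⊗[K] V₂) := (T₂ - 1).lTensor V₁ with hN₂_def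
  obtain ⟨fr, hfr⟩ := rTensorAlgHom_exists K (V₁ := V₁) (V₂ := V₂)
  obtain ⟨fl, hfl⟩ := lTensorAlgHom_exists K (V₁ := V₁) (V₂ := V₂)
  have hN₁p : N₁ ^ p = 0 := by
    rw [hN₁_def, ← hfr, ← map_pow, hp, map_zero]
  have hN₂q : N₂ ^ q = 0 := by
    rw [hN₂_def, ← hfl, ← map_pow, hq, map_zero]
  have hcomm : Commute N₁ N₂ := by
    show N₁ * N₂ = N₂ * N₁
    rw [hN₁_def, hN₂_def, Module.End.mul_eq_comp, Module.End.mul_eq_comp,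
      LinearMap.rTensor_comp_lTensor, LinearMap.lTensor_comp_rTensor]
  have hmap : TensorProduct.map T₁ T₂ = (1 + N₁) * (1 + N₂) := by
    have h1 : (1 : Module.End K (V₁ ⊗[K] V₂)) + N₁ = T₁.rTensor V₂ := by
      rw [hN₁_def, ← hfr (T₁ - 1), map_sub, map_one, hfr]; abel
    have h2 : (1 : Module.End K (V₁ ⊗[K] V₂)) + N₂ = T₂.lTensor V₁ := by
      rw [hN₂_def, ← hfl (T₂ - 1), map_sub, map_one, hfl]; abel
    rw [h1, h2, Module.End.mul_eq_comp, LinearMap.rTensor_comp_lTensor]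
  have hsub : TensorProduct.map T₁ T₂ - 1 = N₁ + N₂ + N₁ * N₂ := by
    rw [hmap]; noncomm_ring
  -- the three parts
  have hunit : IsUnit (TensorProduct.map T₁ T₂) := by
    rw [isUnit_iff_exists]
    refine ⟨TensorProduct.map (↑hu₁.unit⁻¹) (↑hu₂.unit⁻¹), ?_, ?_⟩
    · rw [← TensorProduct.map_mul, hu₁.mul_val_inv, hu₂.mul_val_inv]
      exact TensorProduct.map_one
    · rw [← TensorProduct.map_mul, hu₁.val_inv_mul, hu₂.val_inv_mul]
      exact TensorProduct.map_one
  have hnilsub : IsNilpotent (TensorProduct.map T₁ T₂ - 1) := by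
    rw [hsub]
    have h1 : IsNilpotent N₁ := ⟨p, hN₁p⟩
    have h2 : IsNilpotent N₂ := ⟨q, hN₂q⟩
    have h12 : IsNilpotent (N₁ * N₂) := hcomm.isNilpotent_mul_left h2
    have hc : Commute (N₁ + N₂) (N₁ * N₂) := by
      apply Commute.add_left
      · exact (Commute.refl N₁).mul_right hcomm
      · exact hcomm.symm.mul_right (Commute.refl N₂)
    exact hc.isNilpotent_add (hcomm.isNilpotent_add h1 h2) h12
  refine ⟨hunit, hnilsub, ?_⟩
  -- main identity
  set n : ℕ := nilpotencyClass (TensorProduct.map T₁ T₂ - 1) + nilpotencyClass (T₁ - 1)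
      + nilpotencyClass (T₂ - 1) + p + q with hn_def
  have e0 : logEnd (TensorProduct.map T₁ T₂) = LK K n (TensorProduct.map T₁ T₂ - 1) :=
    logEnd_eq_LK K _ hnilsub (by omega)
  have e1 : logEnd T₁ = LK K n (T₁ - 1) := logEnd_eq_LK K _ ⟨p, hp⟩ (by omega)
  have e2 : logEnd T₂ = LK K n (T₂ - 1) := logEnd_eq_LK K _ ⟨q, hq⟩ (by omega)
  rw [e0, e1, e2, hsub]
  rw [LK_add_of_commute K N₁ N₂ hcomm hN₁p hN₂q (by omega)]
  rw [← hfr, ← hfl, map_LK, map_LK, hfr, hfl, hN₁_def, hN₂_def]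
end

section
/- Let K be a field of characteristic zero, let V₁ and V₂ be K-vector spaces, and let N₁ : V₁ → V₁ and N₂ : V₂ → V₂ be K-linear endomorphisms. Suppose a and b are natural numbers with N₁^a ≠ 0, N₁^{a+1} = 0, N₂^b ≠ 0 and N₂^{b+1} = 0. Then (N₁ ⊗ id + id ⊗ N₂)^{a+b} ≠ 0 and (N₁ ⊗ id + id ⊗ N₂)^{a+b+1} = 0 on V₁ ⊗_K V₂; that is, the index of nilpotency of N₁ ⊗ id + id ⊗ N₂ equals the sum of the indices of nilpotency of N₁ and N₂. -/
open TensorProduct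

lemma tmul_ne_zero' {K V₁ V₂ : Type*} [Field K]
    [AddCommGroup V₁] [Module K V₁] [AddCommGroup V₂] [Module K V₂]
    {x : V₁} {y : V₂} (hx : x ≠ 0) (hy : y ≠ 0) : x ⊗ₜ[K] y ≠ 0 := by
  obtain ⟨φ, hφ⟩ := not_forall.mp ((not_iff_not.mpr (Module.forall_dual_apply_eq_zero_iff K x)).mpr hx)
  obtain ⟨ψ, hψ⟩ := not_forall.mp ((not_iff_not.mpr (Module.forall_dual_apply_eq_zero_iff K y)).mpr hy)
  intro h
  have := congrArg ((TensorProduct.lid K K).toLinearMap.comp (TensorProduct.map φ ψ)) h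
  simp [TensorProduct.map_tmul, TensorProduct.lid_tmul, smul_eq_mul] at this
  rcases this with h1 | h1 <;> [exact hφ h1; exact hψ h1]

/-- If `N₁`, `N₂` are endomorphisms of vector spaces over a field of characteristic zero
with nilpotency indices exactly `a` and `b` (i.e. `N₁^a ≠ 0`, `N₁^{a+1} = 0`, `N₂^b ≠ 0`,
`N₂^{b+1} = 0`), then the index of nilpotency of `N₁ ⊗ id + id ⊗ N₂` is exactly `a + b`. -/
theorem nilp_index_sum_tensor {K V₁ V₂ : Type*} [Field K] [CharZero K]
    [AddCommGroup V₁] [Module K V₁] [AddCommGroup V₂] [Module K V₂]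
    (N₁ : Module.End K V₁) (N₂ : Module.End K V₂) (a b : ℕ)
    (ha : N₁ ^ a ≠ 0) (ha' : N₁ ^ (a + 1) = 0)
    (hb : N₂ ^ b ≠ 0) (hb' : N₂ ^ (b + 1) = 0) :
    (N₁.rTensor V₂ + N₂.lTensor V₁) ^ (a + b) ≠ 0 ∧
      (N₁.rTensor V₂ + N₂.lTensor V₁) ^ (a + b + 1) = 0 := by
  have hc : Commute (N₁.rTensor V₂) (N₂.lTensor V₁) := by
    show _ * _ = _ * _
    rw [Module.End.mul_eq_comp, Module.End.mul_eq_comp,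
      LinearMap.rTensor_comp_lTensor, LinearMap.lTensor_comp_rTensor]
  have h1 : ∀ k, a + 1 ≤ k → N₁ ^ k = 0 := fun k hk => pow_eq_zero_of_le hk ha'
  have h2 : ∀ k, b + 1 ≤ k → N₂ ^ k = 0 := fun k hk => pow_eq_zero_of_le hk hb'
  constructor
  · intro h0
    obtain ⟨x, hx⟩ := DFunLike.ne_iff.mp ha
    obtain ⟨y, hy⟩ := DFunLike.ne_iff.mp hb
    simp only [LinearMap.zero_apply] at hx hy
    have := congrArg (fun f : Module.End K (V₁ ⊗[K] V₂) => f (x ⊗ₜ[K] y)) h0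
    rw [hc.add_pow] at this
    simp only [LinearMap.zero_apply, LinearMap.coe_sum, Finset.sum_apply] at this
    have key : ∀ k ∈ Finset.range (a + b + 1),
        ((N₁.rTensor V₂) ^ k * (N₂.lTensor V₁) ^ (a + b - k) *
          (((a + b).choose k : ℕ) : Module.End K (V₁ ⊗[K] V₂))) (x ⊗ₜ[K] y)
        = (a + b).choose k • ((N₁ ^ k) x ⊗ₜ[K] (N₂ ^ (a + b - k)) y) := by
      intro k _
      simp only [Module.End.mul_apply, Module.End.natCast_apply, map_nsmul,
        LinearMap.rTensor_pow, LinearMap.lTensor_pow, LinearMap.lTensor_tmul,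
        LinearMap.rTensor_tmul]
    rw [Finset.sum_congr rfl key, Finset.sum_eq_single a] at this
    · rw [← Nat.cast_smul_eq_nsmul K] at this
      exact smul_ne_zero (Nat.cast_ne_zero.mpr (Nat.choose_pos (Nat.le_add_right a b)).ne')
        (by simpa using tmul_ne_zero' hx hy) this
    · intro k hk hka
      rcases lt_or_gt_of_ne hka with h | h
      · have : b + 1 ≤ a + b - k := by omega
        rw [h2 _ this]
        simp
      · rw [h1 _ h]
        simp
    · intro h; simp at h
  · rw [hc.add_pow]
    apply Finset.sum_eq_zero
    intro k hk
    rcases le_or_gt k a with h | h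
    · have : b + 1 ≤ a + b + 1 - k := by omega
      rw [LinearMap.lTensor_pow, h2 _ this]
      simp
    · rw [LinearMap.rTensor_pow, h1 _ h]
      simp
end

section
/- Let R be a commutative ring, V an R-module, N : V → V an R-linear endomorphism, and v ∈ V an element with N^{l+1} v = 0 for a natural number l. Fix k ≥ 1 and let D be the endomorphism of the k-fold tensor power V^{⊗k} given by D = Σ_{j=1}^{k} id^{⊗(j−1)} ⊗ N ⊗ id^{⊗(k−j)} (i.e., N acting in the j-th tensor slot and the identity elsewhere). Then D^{kl}(v ⊗ ⋯ ⊗ v) = ((kl)! / (l!)^k) · (N^l v) ⊗ ⋯ ⊗ (N^l v), where the multinomial coefficient (kl)!/(l!)^k is a positive integer, and D^{kl+1}(v ⊗ ⋯ ⊗ v) = 0. -/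
/-- Let `N` be an endomorphism of an `R`-module `V` and `v ∈ V` with `N^{l+1} v = 0`.
Let `D = Σ_{j=1}^{k} id^{⊗(j−1)} ⊗ N ⊗ id^{⊗(k−j)}` on the `k`-fold tensor power `V^{⊗k}`.
Then `D^{kl}(v ⊗ ⋯ ⊗ v) = ((kl)!/(l!)^k) • (N^l v) ⊗ ⋯ ⊗ (N^l v)`, where the multinomial
coefficient `(kl)!/(l!)^k` is a positive integer, and `D^{kl+1}(v ⊗ ⋯ ⊗ v) = 0`. -/
theorem pow_derivation_tensor_power_apply {R V : Type*} [CommRing R]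
    [AddCommGroup V] [Module R V]
    (N : Module.End R V) (v : V) (l : ℕ) (hv : (N ^ (l + 1)) v = 0)
    (k : ℕ) (hk : 1 ≤ k)
    (D : Module.End R (PiTensorProduct R (fun _ : Fin k => V)))
    (hD : D = ∑ j : Fin k,
      PiTensorProduct.map (Function.update (fun _ => (LinearMap.id : V →ₗ[R] V)) j N)) :
    Nat.factorial l ^ k ∣ Nat.factorial (k * l) ∧
    0 < Nat.factorial (k * l) / Nat.factorial l ^ k ∧
    (D ^ (k * l)) (PiTensorProduct.tprod R (fun _ : Fin k => v)) =
      (Nat.factorial (k * l) / Nat.factorial l ^ k) •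
        PiTensorProduct.tprod R (fun _ : Fin k => (N ^ l) v) ∧
    (D ^ (k * l + 1)) (PiTensorProduct.tprod R (fun _ : Fin k => v)) = 0 := by
  classical
  set M : Fin k → Module.End R (PiTensorProduct R (fun _ : Fin k => V)) :=
    fun j => PiTensorProduct.map (Function.update (fun _ => (LinearMap.id : V →ₗ[R] V)) j N)
    with hM
  have hDM : D = ∑ j : Fin k, M j := hD
  -- action of `M j` on pure tensors
  have hMapp : ∀ (j : Fin k) (w : Fin k → V),
      M j (PiTensorProduct.tprod R w) =
        PiTensorProduct.tprod R (Function.update w j (N (w j))) := by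
    intro j w
    rw [hM]
    simp only [PiTensorProduct.map_tprod]
    congr 1
    funext i
    by_cases h : i = j
    · subst h; simp
    · simp [Function.update_of_ne h]
  -- the `M j` pairwise commute
  have hcomm : (↑(Finset.univ : Finset (Fin k)) : Set (Fin k)).Pairwise
      (Function.onFun Commute M) := by
    intro i _ j _ hij
    have : M i * M j = M j * M i := by
      apply PiTensorProduct.ext
      apply MultilinearMap.ext
      intro w
      simp only [LinearMap.compMultilinearMap_apply, Module.End.mul_apply]
      rw [hMapp, hMapp, hMapp, hMapp]
      rw [Function.update_of_ne hij, Function.update_of_ne (Ne.symm hij)]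
      rw [Function.update_comm hij]
    exact this
  -- action of powers of `M j` on pure tensors
  have hpow : ∀ (j : Fin k) (m : ℕ) (w : Fin k → V),
      (M j ^ m) (PiTensorProduct.tprod R w) =
        PiTensorProduct.tprod R (Function.update w j ((N ^ m) (w j))) := by
    intro j m
    induction m with
    | zero => intro w; simp
    | succ m ih =>
      intro w
      rw [pow_succ', Module.End.mul_apply, ih, hMapp]
      rw [Function.update_idem, Function.update_self]
      congr 2
      rw [pow_succ', Module.End.mul_apply]
  -- action of noncommutative products on the pure tensor of `v`'s
  have key : ∀ (a : Fin k → ℕ) (s : Finset (Fin k))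
      (hc : (↑s : Set (Fin k)).Pairwise (Function.onFun Commute fun i => M i ^ a i)),
      (s.noncommProd (fun i => M i ^ a i) hc) (PiTensorProduct.tprod R (fun _ : Fin k => v)) =
        PiTensorProduct.tprod R (fun j => if j ∈ s then (N ^ a j) v else v) := by
    intro a s
    induction s using Finset.cons_induction with
    | empty => intro hc; simp
    | cons b s hb ih =>
      intro hc
      rw [Finset.noncommProd_cons, Module.End.mul_apply,
        ih (hc.mono (by simp [Finset.subset_cons]))]
      rw [hpow]
      congr 1
      funext j
      by_cases hj : j = b
      · subst hj
        simp [hb]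
      · simp [Function.update_of_ne hj, Finset.mem_cons, hj]
  -- main expansion
  have hDn : ∀ n : ℕ, (D ^ n) (PiTensorProduct.tprod R (fun _ : Fin k => v)) =
      ∑ a ∈ Finset.piAntidiag Finset.univ n,
        Nat.multinomial Finset.univ a • PiTensorProduct.tprod R (fun j => (N ^ a j) v) := by
    intro n
    rw [hDM, Finset.sum_pow_eq_sum_piAntidiag_of_commute Finset.univ M hcomm n]
    rw [LinearMap.sum_apply]
    apply Finset.sum_congr rfl
    intro a _
    rw [Module.End.mul_apply, key, Module.End.natCast_apply]
    simp
  -- vanishing of high powers on v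
  have hNv : ∀ m : ℕ, l + 1 ≤ m → (N ^ m) v = 0 := by
    intro m hm
    obtain ⟨c, rfl⟩ := Nat.exists_eq_add_of_le hm
    rw [add_comm, pow_add, Module.End.mul_apply, hv, map_zero]
  have htz : ∀ a : Fin k → ℕ, (∃ j, l + 1 ≤ a j) →
      PiTensorProduct.tprod R (fun j => (N ^ a j) v) = 0 := by
    intro a ⟨j, hj⟩
    have h1 : (fun j' => (N ^ a j') v) =
        Function.update (fun j' => (N ^ a j') v) j 0 := by
      funext i
      by_cases h : i = j
      · subst h; rw [Function.update_self, hNv _ hj]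
      · rw [Function.update_of_ne h]
    rw [h1, MultilinearMap.map_update_zero]
  -- the multinomial coefficient
  have hmult : Nat.multinomial Finset.univ (fun _ : Fin k => l) =
      Nat.factorial (k * l) / Nat.factorial l ^ k := by
    rw [Nat.multinomial]
    simp [Finset.sum_const, Finset.prod_const, Finset.card_univ, mul_comm]
  have hmem : (fun _ : Fin k => l) ∈ Finset.piAntidiag (Finset.univ : Finset (Fin k)) (k * l) := by
    rw [Finset.mem_piAntidiag]
    refine ⟨?_, fun i _ => Finset.mem_univ i⟩
    simp [Finset.sum_const, Finset.card_univ, mul_comm]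
  refine ⟨?_, ?_, ?_, ?_⟩
  · -- divisibility
    have := Nat.multinomial_spec (Finset.univ : Finset (Fin k)) (fun _ => l)
    rw [Finset.prod_const, Finset.card_univ, Fintype.card_fin] at this
    refine ⟨Nat.multinomial Finset.univ (fun _ : Fin k => l), ?_⟩
    rw [this]
    congr 1
    simp [Finset.sum_const, Finset.card_univ, mul_comm]
  · rw [← hmult]; exact Nat.multinomial_pos _ _
  · -- main formula
    rw [hDn]
    rw [Finset.sum_eq_single_of_mem (fun _ : Fin k => l) hmem]
    · rw [hmult]
    · intro b hb hne
      rw [Finset.mem_piAntidiag] at hb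
      have hex : ∃ j, l + 1 ≤ b j := by
        by_contra hcon
        push_neg at hcon
        apply hne
        funext j
        have hle : ∀ i ∈ Finset.univ, b i ≤ (fun _ : Fin k => l) i := by
          intro i _
          exact Nat.lt_succ_iff.mp (hcon i)
        have hsum : ∑ i ∈ Finset.univ, b i = ∑ i ∈ Finset.univ, (fun _ : Fin k => l) i := by
          rw [hb.1]
          simp [Finset.sum_const, Finset.card_univ, mul_comm]
        exact (Finset.sum_eq_sum_iff_of_le hle).mp hsum j (Finset.mem_univ j)
      rw [htz b hex]; exact nsmul_zero _
  · -- vanishing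
    rw [hDn]
    apply Finset.sum_eq_zero
    intro a ha
    rw [Finset.mem_piAntidiag] at ha
    have hex : ∃ j, l + 1 ≤ a j := by
      by_contra hcon
      push_neg at hcon
      have : ∑ i ∈ Finset.univ, a i ≤ ∑ _i ∈ (Finset.univ : Finset (Fin k)), l :=
        Finset.sum_le_sum fun i _ => Nat.lt_succ_iff.mp (hcon i)
      rw [ha.1] at this
      simp only [Finset.sum_const, Finset.card_univ, Fintype.card_fin, smul_eq_mul] at this
      omega
    rw [htz a hex]; exact nsmul_zero _
end

section
/- Let K be a field of characteristic zero, V a K-vector space, and N : V → V a K-linear endomorphism with N^l ≠ 0 and N^{l+1} = 0 for a natural number l. Fix k ≥ 1 and let D be the endomorphism of the k-fold tensor power V^{⊗k} given by D = Σ_{j=1}^{k} id^{⊗(j−1)} ⊗ N ⊗ id^{⊗(k−j)}. Then D^{kl} ≠ 0 and D^{kl+1} = 0; that is, the index of nilpotency of D is exactly k times the index of nilpotency of N. -/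
open Finset

section Aux
variable {K V : Type*} [Field K] [AddCommGroup V] [Module K V]

lemma aux_map_eq_zero_of_component {k : ℕ} (f : Fin k → Module.End K V) (j : Fin k)
    (hj : f j = 0) : PiTensorProduct.map f = 0 := by
  ext x
  simp only [LinearMap.compMultilinearMap_apply, PiTensorProduct.map_tprod, LinearMap.zero_comp,
    LinearMap.zero_apply, MultilinearMap.zero_apply]
  have h0 : (fun i => f i (x i)) j = 0 := by simp [hj]
  exact (PiTensorProduct.tprod K).map_coord_zero j h0

lemma aux_single_pow {k : ℕ} (N : Module.End K V) (i : Fin k) (m : ℕ) :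
    Pi.mulSingle (M := fun _ : Fin k => Module.End K V) i N ^ m
      = Pi.mulSingle (M := fun _ : Fin k => Module.End K V) i (N ^ m) := by
  funext j
  rcases eq_or_ne j i with h | h <;> simp [Pi.pow_apply, Pi.mulSingle_apply, h]

lemma aux_noncommProd_single {k : ℕ} (g : Fin k → Module.End K V) (comm) :
    univ.noncommProd (fun i => (PiTensorProduct.map (R := K) (Pi.mulSingle i (g i)) :
        Module.End K (PiTensorProduct K (fun _ : Fin k => V)))) comm
    = PiTensorProduct.map g := by
  have h := Finset.map_noncommProd (univ : Finset (Fin k))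
    (fun i => Pi.mulSingle (M := fun _ : Fin k => Module.End K V) i (g i))
    (fun i _ j _ hij => Pi.mulSingle_commute (f := fun _ : Fin k => Module.End K V) hij _ _)
    (PiTensorProduct.mapMonoidHom (R := K) (s := fun _ : Fin k => V))
  rw [Finset.noncommProd_mulSingle (M := fun _ : Fin k => Module.End K V) g] at h
  exact h.symm

lemma aux_pow_expand {k : ℕ} (N : Module.End K V) (n : ℕ) :
    (∑ j : Fin k, PiTensorProduct.map
        (Function.update (fun _ => (LinearMap.id : V →ₗ[K] V)) j N)) ^ n
    = ∑ a ∈ piAntidiag (univ : Finset (Fin k)) n,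
        (Nat.multinomial univ a : Module.End K (PiTensorProduct K (fun _ : Fin k => V)))
          * PiTensorProduct.map (fun i => N ^ a i) := by
  have hfun : ∀ j : Fin k,
      PiTensorProduct.map (Function.update (fun _ => (LinearMap.id : V →ₗ[K] V)) j N)
      = (PiTensorProduct.map (R := K) (Pi.mulSingle j N) :
          Module.End K (PiTensorProduct K (fun _ : Fin k => V))) := fun j => rfl
  have hcomm : (↑(univ : Finset (Fin k)) : Set (Fin k)).Pairwise
      (Function.onFun Commute fun j => (PiTensorProduct.map (R := K) (Pi.mulSingle j N) :
        Module.End K (PiTensorProduct K (fun _ : Fin k => V)))) := by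
    intro i _ j _ hij
    show _ * _ = _ * _
    rw [← PiTensorProduct.map_mul, ← PiTensorProduct.map_mul]
    congr 1
    exact (Pi.mulSingle_commute (f := fun _ : Fin k => Module.End K V) hij N N).eq
  simp only [hfun]
  rw [Finset.sum_pow_eq_sum_piAntidiag_of_commute _ _ hcomm]
  refine Finset.sum_congr rfl fun a _ => ?_
  congr 1
  have h1 : ∀ i : Fin k, (PiTensorProduct.map (R := K) (Pi.mulSingle i N) :
      Module.End K (PiTensorProduct K (fun _ : Fin k => V))) ^ a i
      = PiTensorProduct.map (Pi.mulSingle i (N ^ a i)) := by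
    intro i
    rw [← PiTensorProduct.map_pow, aux_single_pow]
  rw [Finset.noncommProd_congr rfl (fun i _ => h1 i) (by
    intro i _ j _ hij
    simp only [Function.onFun]
    rw [h1 i, h1 j]
    show _ * _ = _ * _
    rw [← PiTensorProduct.map_mul, ← PiTensorProduct.map_mul]
    congr 1
    exact (Pi.mulSingle_commute (f := fun _ : Fin k => Module.End K V) hij _ _).eq)]
  exact aux_noncommProd_single (fun i => N ^ a i) _

end Aux

/-- Let `N` be an endomorphism of a vector space `V` over a field of characteristic zero
with nilpotency index exactly `l` (i.e. `N^l ≠ 0` and `N^{l+1} = 0`), and let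
`D = Σ_{j=1}^{k} id^{⊗(j−1)} ⊗ N ⊗ id^{⊗(k−j)}` on the `k`-fold tensor power `V^{⊗k}`
(with `k ≥ 1`). Then `D^{kl} ≠ 0` and `D^{kl+1} = 0`, i.e. the index of nilpotency of
`D` is exactly `k` times that of `N`. -/
theorem nilp_index_derivation_tensor_power {K V : Type*} [Field K] [CharZero K]
    [AddCommGroup V] [Module K V]
    (N : Module.End K V) (l : ℕ) (h₁ : N ^ l ≠ 0) (h₂ : N ^ (l + 1) = 0)
    (k : ℕ) (hk : 1 ≤ k)
    (D : Module.End K (PiTensorProduct K (fun _ : Fin k => V)))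
    (hD : D = ∑ j : Fin k,
      PiTensorProduct.map (Function.update (fun _ => (LinearMap.id : V →ₗ[K] V)) j N)) :
    D ^ (k * l) ≠ 0 ∧ D ^ (k * l + 1) = 0 := by
  have expand : ∀ n : ℕ, D ^ n = ∑ a ∈ piAntidiag (univ : Finset (Fin k)) n,
      (Nat.multinomial univ a : Module.End K (PiTensorProduct K (fun _ : Fin k => V)))
        * PiTensorProduct.map (fun i => N ^ a i) := fun n => by
    rw [hD]; exact aux_pow_expand N n
  have hsum_const : ∑ _i : Fin k, l = k * l := by
    simp [Finset.sum_const, mul_comm]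
  constructor
  · -- D ^ (k*l) ≠ 0
    have hone : D ^ (k * l)
        = (Nat.multinomial univ (fun _ : Fin k => l) :
            Module.End K (PiTensorProduct K (fun _ : Fin k => V)))
          * PiTensorProduct.map (fun _ : Fin k => N ^ l) := by
      rw [expand]
      rw [Finset.sum_eq_single (fun _ : Fin k => l)]
      · intro a ha hne
        rw [mem_piAntidiag] at ha
        obtain ⟨j, hj⟩ : ∃ j, l + 1 ≤ a j := by
          by_contra h
          push_neg at h
          have hle : ∀ i, a i ≤ l := fun i => Nat.lt_succ_iff.mp (h i)
          refine hne ?_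
          funext i
          by_contra hi
          have hlt : ∑ i : Fin k, a i < ∑ _i : Fin k, l :=
            Finset.sum_lt_sum (fun i _ => hle i)
              ⟨i, Finset.mem_univ i, lt_of_le_of_ne (hle i) hi⟩
          rw [ha.1, hsum_const] at hlt
          omega
        rw [aux_map_eq_zero_of_component _ j (pow_eq_zero_of_le hj h₂), mul_zero]
      · intro h
        exact absurd (by simp [mem_piAntidiag, hsum_const]) h
    intro hD0
    obtain ⟨v, hv⟩ : ∃ v, (N ^ l) v ≠ 0 := by
      by_contra h
      push_neg at h
      exact h₁ (LinearMap.ext h)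
    obtain ⟨φ, hφ⟩ : ∃ φ : Module.Dual K V, φ ((N ^ l) v) ≠ 0 := by
      by_contra h
      push_neg at h
      exact hv ((Module.forall_dual_apply_eq_zero_iff K _).mp h)
    have happ := congrArg (fun T : Module.End K (PiTensorProduct K (fun _ : Fin k => V)) =>
      PiTensorProduct.lift
        ((MultilinearMap.mkPiAlgebra K (Fin k) K).compLinearMap (fun _ => φ))
        (T (PiTensorProduct.tprod K (fun _ => v)))) (hone ▸ hD0)
    simp only [LinearMap.zero_apply, map_zero, Module.End.mul_apply] at happ
    simp only [PiTensorProduct.map_tprod, Module.End.natCast_apply, map_nsmul,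
      PiTensorProduct.lift.tprod, MultilinearMap.compLinearMap_apply,
      MultilinearMap.mkPiAlgebra_apply, Finset.prod_const, Finset.card_univ,
      Fintype.card_fin, nsmul_eq_mul] at happ
    have hm : ((Nat.multinomial univ (fun _ : Fin k => l) : ℕ) : K) ≠ 0 :=
      Nat.cast_ne_zero.mpr (Nat.multinomial_pos _ _).ne'
    exact (mul_ne_zero hm (pow_ne_zero k hφ)) happ
  · -- D ^ (k*l+1) = 0
    rw [expand]
    refine Finset.sum_eq_zero fun a ha => ?_
    rw [mem_piAntidiag] at ha
    obtain ⟨j, hj⟩ : ∃ j, l + 1 ≤ a j := by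
      by_contra h
      push_neg at h
      have hle : ∑ i : Fin k, a i ≤ ∑ _i : Fin k, l :=
        Finset.sum_le_sum fun i _ => Nat.lt_succ_iff.mp (h i)
      rw [ha.1, hsum_const] at hle
      omega
    rw [aux_map_eq_zero_of_component _ j (pow_eq_zero_of_le hj h₂), mul_zero]
end

section
/- Let n be a positive natural number and let λ be a partition of n. Let p be the total number of parts of λ (counted with multiplicity) and let d be the number of distinct values occurring among the parts of λ. Then p + d ≤ n + 1. -/
/-!
Writing each part `x` as `(x - 1) + 1` gives `n = p + ∑ (x - 1)`, the sum running over the parts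
with multiplicity. Every distinct part value other than `1` contributes at least `1` to that sum,
so `n - p ≥ d - 1`.
-/

open Finset

namespace Multiset

variable {ι M : Type*}

lemma sum_toFinset_le_sum_map [DecidableEq ι] [AddCommMonoid M] [PartialOrder M]
    [CanonicallyOrderedAdd M] (s : Multiset ι) (f : ι → M) :
    ∑ a ∈ s.toFinset, f a ≤ (s.map f).sum := by
  obtain ⟨t, ht⟩ := le_iff_exists_add.mp (dedup_le s)
  calc ∑ a ∈ s.toFinset, f a = (s.dedup.map f).sum := rfl
    _ ≤ (s.dedup.map f).sum + (t.map f).sum := le_self_add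
    _ = (s.map f).sum := by rw [← sum_add, ← map_add, ← ht]

lemma sum_map_sub_one_add_card {s : Multiset ℕ} (hs : ∀ x ∈ s, 0 < x) :
    (s.map (· - 1)).sum + card s = s.sum := by
  calc (s.map (· - 1)).sum + card s = (s.map fun x => x - 1 + 1).sum := by
        simp only [sum_map_add, map_const', sum_replicate, smul_eq_mul, mul_one]
    _ = s.sum := by rw [map_congr rfl fun x hx => Nat.sub_add_cancel (hs x hx), map_id']

end Multiset

lemma Finset.card_erase_one_le_sum_sub_one {t : Finset ℕ} (ht : ∀ x ∈ t, 0 < x) :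
    #(t.erase 1) ≤ ∑ x ∈ t, (x - 1) := by
  rw [card_eq_sum_ones]
  calc ∑ x ∈ t.erase 1, 1 ≤ ∑ x ∈ t.erase 1, (x - 1) :=
        sum_le_sum fun x hx => by
          have := ht x (mem_of_mem_erase hx)
          have := ne_of_mem_erase hx
          omega
    _ ≤ ∑ x ∈ t, (x - 1) := sum_le_sum_of_subset (erase_subset 1 t)

lemma Multiset.card_add_card_toFinset_le_sum_add_one {s : Multiset ℕ} (hs : ∀ x ∈ s, 0 < x) :
    card s + #s.toFinset ≤ s.sum + 1 := by
  have hdistinct : #s.toFinset - 1 ≤ #(s.toFinset.erase 1) := pred_card_le_card_erase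
  have hvalues := card_erase_one_le_sum_sub_one fun x hx => hs x (mem_toFinset.mp hx)
  have hparts := s.sum_toFinset_le_sum_map (· - 1)
  have hsum := sum_map_sub_one_add_card hs
  omega

theorem parts_card_add_distinct_card_le_general (n : ℕ) (lam : n.Partition) :
    Multiset.card lam.parts + lam.parts.toFinset.card ≤ n + 1 := by
  simpa only [lam.parts_sum] using
    Multiset.card_add_card_toFinset_le_sum_add_one fun _ => lam.parts_pos

/-- For a partition `λ` of a positive natural number `n`, the total number of parts
(counted with multiplicity) plus the number of distinct part values is at most `n + 1`. -/
theorem parts_card_add_distinct_card_le (n : ℕ) (hn : 0 < n) (lam : n.Partition) :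
    Multiset.card lam.parts + lam.parts.toFinset.card ≤ n + 1 :=
  parts_card_add_distinct_card_le_general n lam
end
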